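/- arXiv:1004.2978 — 2 statements merged into one kernel-verified Lean document; each statement's English description precedes it below -/
import Mathlib

section
/- Assume N₊ ≥ 1 and N₋ = 0 (so Q = 0 and dc̃₂ = 0). Then (i) an element ω ∈ Ω satisfies dω = 0 if and only if ω ∼ (a₀₀ + c̃₂a₀₁) + ψ₁(a₁₀ + c̃₂a₁₁) for some polynomials a₀₀, a₀₁, a₁₀, a₁₁ lying in the subring ℂ[ψ₂,…,ψ_{N₊}] of R (complex constants when N₊ = 1); and (ii) (a₀₀ + c̃₂a₀₁) + ψ₁(a₁₀ + c̃₂a₁₁) ∼ 0 for such coefficients if and only if a₀₀ = a₀₁ = a₁₀ = a₁₁ = 0. -/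
/-!
D = 2, signature (1,1) supersymmetry algebra cohomology.
`R2 Np Nm = ℂ[ψ₁,…,ψ_{N₊}, χ₁,…,χ_{N₋}]`, `Om2` is the free module with basis
`{1, c̃₁, c̃₂, c̃₁c̃₂}`, and `d2` is the differential with `dc̃₁ = P`, `dc̃₂ = Q`.
-/

open MvPolynomial

noncomputable section

/-- The polynomial ring `ℂ[ψ₁,…,ψ_{N₊}, χ₁,…,χ_{N₋}]`; `Sum.inl i ↦ ψᵢ`, `Sum.inr i ↦ χᵢ`. -/
abbrev R2 (Np Nm : ℕ) : Type := MvPolynomial (Fin Np ⊕ Fin Nm) ℂ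

/-- `Ω`: free `R2`-module with basis `{1, c̃₁, c̃₂, c̃₁c̃₂}` (components 0,1,2,3). -/
abbrev Om2 (Np Nm : ℕ) : Type := Fin 4 → R2 Np Nm

/-- The ghost `ψᵢ`. -/
def ψ {Np Nm : ℕ} (i : Fin Np) : R2 Np Nm := X (Sum.inl i)

/-- The ghost `χᵢ`. -/
def χ {Np Nm : ℕ} (i : Fin Nm) : R2 Np Nm := X (Sum.inr i)

/-- `P = Σ ψᵢ²`. -/
def Pp (Np Nm : ℕ) : R2 Np Nm := ∑ i, ψ i ^ 2

/-- `Q = Σ χᵢ²`. -/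
def Qq (Np Nm : ℕ) : R2 Np Nm := ∑ i, χ i ^ 2

/-- The differential `d(ω₀ + c̃₁ω₁ + c̃₂ω₂ + c̃₁c̃₂ω₃) = Pω₁ + Qω₂ + (Pc̃₂ − Qc̃₁)ω₃`. -/
def d2 {Np Nm : ℕ} (ω : Om2 Np Nm) : Om2 Np Nm :=
  ![Pp Np Nm * ω 1 + Qq Np Nm * ω 2, -(Qq Np Nm * ω 3), Pp Np Nm * ω 3, 0]

/-- Embedding of `R` into `Ω` (coefficient of the basis element `1`). -/
def ofR {Np Nm : ℕ} (r : R2 Np Nm) : Om2 Np Nm := ![r, 0, 0, 0]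

/-- `ω ∼ ω'` iff `ω − ω' = dρ` for some `ρ`. -/
def Equiv2 {Np Nm : ℕ} (ω ω' : Om2 Np Nm) : Prop := ∃ ρ, ω - ω' = d2 ρ


/-- The subring `ℂ[ψ₂,…,ψ_{N₊}]` of `R2 Np 0`. -/
def coefRingP (Np : ℕ) (hp : 0 < Np) : Subalgebra ℂ (R2 Np 0) :=
  MvPolynomial.supported ℂ {v : Fin Np ⊕ Fin 0 | v ≠ Sum.inl ⟨0, hp⟩}

/-!
With no negative-chirality ghosts `Q = 0`, so `d` only sees the coefficients of `c̃₁` and `c̃₁c̃₂`,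
multiplying them by `P`. Since `P ≠ 0`, a cocycle has no `c̃₁`- and `c̃₁c̃₂`-components, and two
forms are cohomologous iff those components agree and the other two agree modulo `P`. Viewing
`ℂ[ψ₁,…,ψ_{N₊}]` as a polynomial ring in `ψ₁` over `A = ℂ[ψ₂,…,ψ_{N₊}]`, `P = ψ₁² + s` with
`s ∈ A` is monic of degree 2, so every polynomial has a unique remainder `a + ψ₁ b` (`a, b ∈ A`)
modulo `P`.
-/

namespace Polynomial

variable {A : Type*} [CommRing A] {p : A[X]}

theorem exists_dvd_sub_C_add_X_mul_C (hp : p.Monic) (hdeg : p.natDegree = 2) (f : A[X]) :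
    ∃ a b : A, p ∣ f - (C a + X * C b) := by
  have hrem : (f %ₘ p).natDegree ≤ 1 := by
    have := natDegree_modByMonic_lt f hp (fun h => by simp [h] at hdeg)
    omega
  refine ⟨(f %ₘ p).coeff 0, (f %ₘ p).coeff 1, f /ₘ p, ?_⟩
  linear_combination eq_X_add_C_of_natDegree_le_one hrem - modByMonic_add_div f p

theorem dvd_C_add_X_mul_C_iff (hp : p.Monic) (hdeg : p.natDegree = 2) (a b : A) :
    p ∣ C a + X * C b ↔ a = 0 ∧ b = 0 := by
  refine ⟨fun hdvd => ?_, fun ⟨ha, hb⟩ => by simp [ha, hb]⟩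
  have hlin : (C a + X * C b).natDegree ≤ 1 := by
    rw [show C a + X * C b = C b * X + C a by ring]
    exact natDegree_linear_le
  have hzero : C a + X * C b = 0 := by
    by_contra hne
    exact hp.not_dvd_of_natDegree_lt hne (by omega) hdvd
  exact ⟨by simpa using congrArg (coeff · 0) hzero, by simpa using congrArg (coeff · 1) hzero⟩

end Polynomial

namespace MvPolynomial

variable {σ R : Type*} [CommRing R] [DecidableEq σ] (i : σ)

def equivPolynomialSubtypeNe : MvPolynomial σ R ≃ₐ[R] Polynomial (MvPolynomial {j // j ≠ i} R) :=
  (renameEquiv R (Equiv.optionSubtypeNe i).symm).trans (optionEquivLeft R _)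

theorem equivPolynomialSubtypeNe_X :
    equivPolynomialSubtypeNe (R := R) i (X i) = Polynomial.X := by
  simp [equivPolynomialSubtypeNe, optionEquivLeft_X_none]

theorem equivPolynomialSubtypeNe_rename_val (t : MvPolynomial {j // j ≠ i} R) :
    equivPolynomialSubtypeNe i (rename Subtype.val t) = Polynomial.C t := by
  have : (equivPolynomialSubtypeNe i).toAlgHom.comp (rename Subtype.val) =
      Polynomial.CAlgHom (R := R) := by
    ext j
    simp [equivPolynomialSubtypeNe, Equiv.optionSubtypeNe_symm_of_ne j.2, Polynomial.CAlgHom]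
  exact congrArg (· t) this

theorem mem_supported_ne_iff (a : MvPolynomial σ R) :
    a ∈ supported R {j | j ≠ i} ↔ ∃ t, equivPolynomialSubtypeNe i a = Polynomial.C t := by
  rw [supported_eq_range_rename, AlgHom.mem_range]
  refine exists_congr fun t => ?_
  rw [← equivPolynomialSubtypeNe_rename_val, (equivPolynomialSubtypeNe i).injective.eq_iff, eq_comm]
  rfl

variable {i} {s : MvPolynomial σ R}

theorem equivPolynomialSubtypeNe_X_sq_add (hs : s ∈ supported R {j | j ≠ i}) :
    ∃ t, equivPolynomialSubtypeNe i (X i ^ 2 + s) = Polynomial.X ^ 2 + Polynomial.C t := by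
  obtain ⟨t, ht⟩ := (mem_supported_ne_iff i s).mp hs
  exact ⟨t, by rw [map_add, map_pow, equivPolynomialSubtypeNe_X, ht]⟩

variable [Nontrivial R]

theorem X_sq_add_ne_zero (hs : s ∈ supported R {j | j ≠ i}) : X i ^ 2 + s ≠ 0 := by
  obtain ⟨t, ht⟩ := equivPolynomialSubtypeNe_X_sq_add hs
  intro h
  rw [h, map_zero] at ht
  exact (Polynomial.monic_X_pow_add_C t two_ne_zero).ne_zero ht.symm

theorem exists_mem_supported_dvd_sub (hs : s ∈ supported R {j | j ≠ i}) (r : MvPolynomial σ R) :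
    ∃ a ∈ supported R {j | j ≠ i}, ∃ b ∈ supported R {j | j ≠ i},
      X i ^ 2 + s ∣ r - (a + X i * b) := by
  set e := equivPolynomialSubtypeNe (R := R) i
  obtain ⟨t, ht⟩ := equivPolynomialSubtypeNe_X_sq_add hs
  obtain ⟨a, b, hdvd⟩ := Polynomial.exists_dvd_sub_C_add_X_mul_C
    (Polynomial.monic_X_pow_add_C t two_ne_zero) Polynomial.natDegree_X_pow_add_C (e r)
  refine ⟨e.symm (.C a), (mem_supported_ne_iff i _).mpr ⟨a, e.apply_symm_apply _⟩,
    e.symm (.C b), (mem_supported_ne_iff i _).mpr ⟨b, e.apply_symm_apply _⟩, ?_⟩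
  rw [← map_dvd_iff e, ht]
  simpa [e, equivPolynomialSubtypeNe_X] using hdvd

theorem X_sq_add_dvd_add_X_mul_iff (hs : s ∈ supported R {j | j ≠ i})
    {a b : MvPolynomial σ R} (ha : a ∈ supported R {j | j ≠ i}) (hb : b ∈ supported R {j | j ≠ i}) :
    X i ^ 2 + s ∣ a + X i * b ↔ a = 0 ∧ b = 0 := by
  set e := equivPolynomialSubtypeNe (R := R) i
  obtain ⟨t, ht⟩ := equivPolynomialSubtypeNe_X_sq_add hs
  obtain ⟨ta, hta⟩ := (mem_supported_ne_iff i a).mp ha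
  obtain ⟨tb, htb⟩ := (mem_supported_ne_iff i b).mp hb
  rw [← map_dvd_iff e, ht, map_add, map_mul, equivPolynomialSubtypeNe_X, hta, htb,
    Polynomial.dvd_C_add_X_mul_C_iff (Polynomial.monic_X_pow_add_C t two_ne_zero)
      Polynomial.natDegree_X_pow_add_C,
    ← map_eq_zero_iff e e.injective, ← map_eq_zero_iff e e.injective (x := b), hta, htb,
    Polynomial.C_eq_zero, Polynomial.C_eq_zero]

end MvPolynomial

section Cohomology

variable {Np Nm : ℕ}

theorem d2_d2 (ρ : Om2 Np Nm) : d2 (d2 ρ) = 0 := by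
  funext k
  fin_cases k <;> simp [d2]
  ring

theorem d2_sub (ω ω' : Om2 Np Nm) : d2 (ω - ω') = d2 ω - d2 ω' := by
  funext k
  fin_cases k <;> simp [d2] <;> ring

theorem Equiv2.d2_eq {ω ω' : Om2 Np Nm} (h : Equiv2 ω ω') : d2 ω = d2 ω' := by
  obtain ⟨ρ, hρ⟩ := h
  rw [← sub_eq_zero, ← d2_sub, hρ, d2_d2]

theorem d2_of_Nm_eq_zero (ω : Om2 Np 0) : d2 ω = ![Pp Np 0 * ω 1, 0, Pp Np 0 * ω 3, 0] := by
  simp [d2, Qq]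

theorem equiv2_iff_of_Nm_eq_zero (ω ω' : Om2 Np 0) :
    Equiv2 ω ω' ↔ Pp Np 0 ∣ ω 0 - ω' 0 ∧ ω 1 = ω' 1 ∧ Pp Np 0 ∣ ω 2 - ω' 2 ∧ ω 3 = ω' 3 := by
  constructor
  · rintro ⟨ρ, hρ⟩
    have h := fun k => congrFun hρ k
    simp only [d2_of_Nm_eq_zero, Pi.sub_apply] at h
    exact ⟨⟨ρ 1, by simpa using h 0⟩, by simpa [sub_eq_zero] using h 1,
      ⟨ρ 3, by simpa using h 2⟩, by simpa [sub_eq_zero] using h 3⟩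
  · rintro ⟨⟨q0, h0⟩, h1, ⟨q2, h2⟩, h3⟩
    refine ⟨![0, q0, 0, q2], funext fun k => ?_⟩
    fin_cases k <;> simp [d2_of_Nm_eq_zero, h0, h1, h2, h3]

end Cohomology

section PositiveChirality

variable {Np : ℕ} (hp : 0 < Np)
include hp

theorem exists_mem_coefRingP_Pp_eq : ∃ s ∈ coefRingP Np hp, Pp Np 0 = ψ ⟨0, hp⟩ ^ 2 + s := by
  refine ⟨∑ i ∈ Finset.univ.erase ⟨0, hp⟩, ψ i ^ 2, Subalgebra.sum_mem _ fun i hi => ?_,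
    (Finset.add_sum_erase _ _ (Finset.mem_univ _)).symm⟩
  exact pow_mem (X_mem_supported.mpr (by simpa using Finset.ne_of_mem_erase hi)) 2

theorem Pp_ne_zero : Pp Np 0 ≠ 0 := by
  obtain ⟨s, hs, hP⟩ := exists_mem_coefRingP_Pp_eq hp
  exact hP ▸ X_sq_add_ne_zero hs

theorem exists_mem_coefRingP_Pp_dvd_sub (r : R2 Np 0) :
    ∃ a ∈ coefRingP Np hp, ∃ b ∈ coefRingP Np hp, Pp Np 0 ∣ r - (a + ψ ⟨0, hp⟩ * b) := by
  obtain ⟨s, hs, hP⟩ := exists_mem_coefRingP_Pp_eq hp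
  exact hP ▸ exists_mem_supported_dvd_sub hs r

theorem Pp_dvd_add_ψ_mul_iff {a b : R2 Np 0} (ha : a ∈ coefRingP Np hp)
    (hb : b ∈ coefRingP Np hp) : Pp Np 0 ∣ a + ψ ⟨0, hp⟩ * b ↔ a = 0 ∧ b = 0 := by
  obtain ⟨s, hs, hP⟩ := exists_mem_coefRingP_Pp_eq hp
  exact hP ▸ X_sq_add_dvd_add_X_mul_iff hs ha hb

theorem d2_eq_zero_iff (ω : Om2 Np 0) : d2 ω = 0 ↔ ω 1 = 0 ∧ ω 3 = 0 := by
  simp [d2_of_Nm_eq_zero, funext_iff, Fin.forall_fin_succ, Pp_ne_zero hp]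

end PositiveChirality

/-- for `N₊ ≥ 1`, `N₋ = 0` (so `Q = 0`, `dc̃₂ = 0`),
(i) `dω = 0` iff `ω ∼ (a₀₀ + c̃₂a₀₁) + ψ₁(a₁₀ + c̃₂a₁₁)` with coefficients in
`ℂ[ψ₂,…,ψ_{N₊}]`; (ii) such a combination is `∼ 0` iff all coefficients vanish. -/
theorem stmt1 (Np : ℕ) (hp : 0 < Np) :
    (∀ ω : Om2 Np 0, d2 ω = 0 ↔
      ∃ a00 ∈ coefRingP Np hp, ∃ a01 ∈ coefRingP Np hp,
      ∃ a10 ∈ coefRingP Np hp, ∃ a11 ∈ coefRingP Np hp,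
        Equiv2 ω ![a00 + ψ ⟨0, hp⟩ * a10, 0, a01 + ψ ⟨0, hp⟩ * a11, 0])
    ∧
    (∀ a00 a01 a10 a11 : R2 Np 0,
      a00 ∈ coefRingP Np hp → a01 ∈ coefRingP Np hp →
      a10 ∈ coefRingP Np hp → a11 ∈ coefRingP Np hp →
      (Equiv2 ![a00 + ψ ⟨0, hp⟩ * a10, 0, a01 + ψ ⟨0, hp⟩ * a11, 0] 0 ↔
        a00 = 0 ∧ a01 = 0 ∧ a10 = 0 ∧ a11 = 0)) := by
  refine ⟨fun ω => ⟨fun hω => ?_, fun ⟨_, _, _, _, _, _, _, _, hequiv⟩ => ?_⟩,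
    fun a00 a01 a10 a11 ha00 ha01 ha10 ha11 => ?_⟩
  · obtain ⟨h1, h3⟩ := (d2_eq_zero_iff hp ω).mp hω
    obtain ⟨a00, ha00, a10, ha10, h0⟩ := exists_mem_coefRingP_Pp_dvd_sub hp (ω 0)
    obtain ⟨a01, ha01, a11, ha11, h2⟩ := exists_mem_coefRingP_Pp_dvd_sub hp (ω 2)
    exact ⟨a00, ha00, a01, ha01, a10, ha10, a11, ha11,
      (equiv2_iff_of_Nm_eq_zero _ _).mpr ⟨h0, by simpa using h1, h2, by simpa using h3⟩⟩
  · rw [hequiv.d2_eq, d2_eq_zero_iff hp]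
    simp
  · rw [equiv2_iff_of_Nm_eq_zero]
    simp only [Matrix.cons_val_zero, Matrix.cons_val_one, Matrix.cons_val, Pi.zero_apply, sub_zero,
      Pp_dvd_add_ψ_mul_iff hp ha00 ha10, Pp_dvd_add_ψ_mul_iff hp ha01 ha11, and_true, true_and]
    tauto
end
end

section
/- Assume N ≥ 1, and let S be an arbitrary invertible 2×2 complex matrix. Then (i) an element ω ∈ Ω satisfies dω = 0 if and only if ω ∼ a + Σ_α ξ₁^α a_α + (Σ_{α,β} ξ₁^α ξ₁^β (ΓC⁻¹)_{αβ}) b for some polynomials a, a_α, b lying in the subring ℂ[ψ₂,…,ψ_N, χ₂,…,χ_N] of R (complex constants when N = 1); and (ii) such a combination is ∼ 0 if and only if a = a₁ = a₂ = b = 0. -/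
/-!
D = 2, signature (1,1) supersymmetry algebra cohomology.
`R2 Np Nm = ℂ[ψ₁,…,ψ_{N₊}, χ₁,…,χ_{N₋}]`, `Om2` is the free module with basis
`{1, c̃₁, c̃₂, c̃₁c̃₂}`, and `d2` is the differential with `dc̃₁ = P`, `dc̃₂ = Q`.
-/

open MvPolynomial

noncomputable section

/-- The subring `ℂ[ψ₂,…,ψ_N, χ₂,…,χ_N]` of `R2 N N`. -/
def coefRingN (N : ℕ) (hN : 0 < N) : Subalgebra ℂ (R2 N N) :=
  MvPolynomial.supported ℂ
    {v : Fin N ⊕ Fin N | v ≠ Sum.inl ⟨0, hN⟩ ∧ v ≠ Sum.inr ⟨0, hN⟩}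

/-- Pauli matrix σ₂. -/
def sigma2 : Matrix (Fin 2) (Fin 2) ℂ := !![0, -Complex.I; Complex.I, 0]

/-- Pauli matrix σ₃. -/
def sigma3 : Matrix (Fin 2) (Fin 2) ℂ := !![1, 0; 0, -1]

/-- Chirality matrix `Γ = S σ₃ S⁻¹`. -/
def Gam (S : Matrix (Fin 2) (Fin 2) ℂ) : Matrix (Fin 2) (Fin 2) ℂ := S * sigma3 * S⁻¹

/-- Charge conjugation matrix `C = (Sᵀ)⁻¹ σ₂ S⁻¹`. -/
def Cmat (S : Matrix (Fin 2) (Fin 2) ℂ) : Matrix (Fin 2) (Fin 2) ℂ :=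
  (S.transpose)⁻¹ * sigma2 * S⁻¹

/-- The Majorana supersymmetry ghost `ξᵢ = (ψᵢ, χᵢ)·S⁻¹`. -/
def xi {N : ℕ} (S : Matrix (Fin 2) (Fin 2) ℂ) (i : Fin N) (α : Fin 2) : R2 N N :=
  C (S⁻¹ 0 α) * ψ i + C (S⁻¹ 1 α) * χ i


/-!
Write `ψ, χ` for `ψ₁, χ₁` and `K` for `ℂ[ψ₂,…,ψ_N, χ₂,…,χ_N]`, so that `R = K[ψ][χ]` with
`P = ψ² + p` and `Q = χ² + q` for some `p, q ∈ K`. Both are monic quadratics in their own variable,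
so division with remainder shows that `1, ψ, χ, ψχ` is a `K`-basis of `R/(P, Q)`; and since `P` is
a nonzero constant in `χ`, every syzygy of `(P, Q)` is a multiple of `(Q, -P)`. Hence a cocycle
is cohomologous to its `c̃`-free part, which is determined modulo `(P, Q)` by its four
`K`-coefficients. Finally `ξ₁ = (ψ, χ) S⁻¹` turns the quadratic form of `ΓC⁻¹` into that of
`S⁻¹ΓC⁻¹S⁻ᵀ = σ₃σ₂`, i.e. into `-2iψχ`, so `(a_α, b)` is an invertible change of coordinates.
-/

namespace Polynomial

variable {A : Type*} [CommRing A] {f : A[X]}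

theorem Monic.exists_eq_C_add_C_mul_X_add_mul (hf : f.Monic) (hf2 : f.natDegree = 2)
    (p : A[X]) : ∃ a b u, p = C a + C b * X + f * u := by
  nontriviality A
  have hdeg : (p %ₘ f).degree ≤ 1 := by
    have := degree_modByMonic_lt p hf
    rw [degree_eq_natDegree hf.ne_zero, hf2] at this
    exact Order.le_of_lt_succ this
  refine ⟨(p %ₘ f).coeff 0, (p %ₘ f).coeff 1, p /ₘ f, ?_⟩
  rw [add_comm (C _), ← eq_X_add_C_of_degree_le_one hdeg, modByMonic_add_div]

theorem Monic.eq_zero_of_dvd_C_add_C_mul_X (hf : f.Monic) (hf2 : f.natDegree = 2) {a b : A}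
    (h : f ∣ C a + C b * X) : a = 0 ∧ b = 0 := by
  nontriviality A
  have hlt : (C a + C b * X).degree < f.degree := by
    rw [degree_eq_natDegree hf.ne_zero, hf2, add_comm]
    exact lt_of_le_of_lt degree_linear_le (by norm_num)
  have h0 : C a + C b * X = 0 := by
    rw [← (modByMonic_eq_self_iff hf).mpr hlt, (modByMonic_eq_zero_iff_dvd hf).mpr h]
  exact ⟨by simpa using congrArg (coeff · 0) h0, by simpa using congrArg (coeff · 1) h0⟩

theorem Monic.dvd_of_dvd_C_mul [NoZeroDivisors A] (hf : f.Monic) {c : A} (hc : c ≠ 0) {p : A[X]}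
    (h : f ∣ C c * p) : f ∣ p := by
  rw [← modByMonic_eq_zero_iff_dvd hf, ← smul_eq_C_mul, smul_modByMonic] at h
  exact (modByMonic_eq_zero_iff_dvd hf).mp ((smul_eq_zero.mp h).resolve_left hc)

theorem Monic.exists_eq_mul_of_C_mul_add_mul_eq_zero [IsDomain A] (hf : f.Monic) {c : A}
    (hc : c ≠ 0) {p q : A[X]} (h : C c * p + f * q = 0) : ∃ t, p = f * t ∧ q = -(C c * t) := by
  obtain ⟨t, rfl⟩ := hf.dvd_of_dvd_C_mul (p := p) hc ⟨-q, by linear_combination h⟩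
  have hq : f * (q + C c * t) = 0 := by linear_combination h
  exact ⟨t, rfl, eq_neg_of_add_eq_zero_left ((mul_eq_zero.mp hq).resolve_left hf.ne_zero)⟩

variable {K : Type*} [CommRing K] {g : K[X]} {h : K[X][X]}

theorem exists_eq_bivariate_normalForm (hg : g.Monic) (hg2 : g.natDegree = 2) (hh : h.Monic)
    (hh2 : h.natDegree = 2) (r : K[X][X]) :
    ∃ a₀ a₁ a₂ a₃ : K, ∃ u v, r = C (C a₀) + C X * C (C a₁) + X * C (C a₂)
      + C X * X * C (C a₃) + C g * u + h * v := by
  obtain ⟨s, t, v, rfl⟩ := hh.exists_eq_C_add_C_mul_X_add_mul hh2 r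
  obtain ⟨a₀, a₁, s, rfl⟩ := hg.exists_eq_C_add_C_mul_X_add_mul hg2 s
  obtain ⟨a₂, a₃, t, rfl⟩ := hg.exists_eq_C_add_C_mul_X_add_mul hg2 t
  exact ⟨a₀, a₁, a₂, a₃, C s + C t * X, v, by simp only [map_add, map_mul]; ring⟩

theorem bivariate_normalForm_eq_zero (hg : g.Monic) (hg2 : g.natDegree = 2) (hh : h.Monic)
    (hh2 : h.natDegree = 2) {a₀ a₁ a₂ a₃ : K} {u v : K[X][X]}
    (heq : C (C a₀) + C X * C (C a₁) + X * C (C a₂) + C X * X * C (C a₃) = C g * u + h * v) :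
    a₀ = 0 ∧ a₁ = 0 ∧ a₂ = 0 ∧ a₃ = 0 := by
  obtain ⟨u₀, u₁, u, rfl⟩ := hh.exists_eq_C_add_C_mul_X_add_mul hh2 u
  have hdvd : h ∣ C (C a₀ + C a₁ * X - g * u₀) + C (C a₂ + C a₃ * X - g * u₁) * X :=
    ⟨v + C g * u, by simp only [map_sub, map_add, map_mul]; linear_combination heq⟩
  obtain ⟨h₀, h₁⟩ := hh.eq_zero_of_dvd_C_add_C_mul_X hh2 hdvd
  obtain ⟨ha₀, ha₁⟩ := hg.eq_zero_of_dvd_C_add_C_mul_X hg2 ⟨u₀, sub_eq_zero.mp h₀⟩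
  obtain ⟨ha₂, ha₃⟩ := hg.eq_zero_of_dvd_C_add_C_mul_X hg2 ⟨u₁, sub_eq_zero.mp h₁⟩
  exact ⟨ha₀, ha₁, ha₂, ha₃⟩

end Polynomial

def Equiv.optionOptionSubtypeNe {σ : Type*} [DecidableEq σ] (a b : σ) (hab : a ≠ b) :
    Option (Option {v // v ≠ a ∧ v ≠ b}) ≃ σ where
  toFun
    | none => b
    | some none => a
    | some (some v) => v
  invFun v := if hb : v = b then none else if ha : v = a then some none else some (some ⟨v, ha, hb⟩)
  left_inv := by
    rintro (_ | _ | ⟨v, hva, hvb⟩) <;> simp [*]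
  right_inv v := by
    by_cases hb : v = b <;> by_cases ha : v = a <;> simp_all

namespace MvPolynomial

variable (R : Type*) [CommRing R] {σ : Type*} [DecidableEq σ]

def splitTwoVarsEquiv (a b : σ) (hab : a ≠ b) :
    MvPolynomial σ R ≃ₐ[R] Polynomial (Polynomial (MvPolynomial {v // v ≠ a ∧ v ≠ b} R)) :=
  (renameEquiv R (Equiv.optionOptionSubtypeNe a b hab).symm).trans
    ((optionEquivLeft R _).trans (Polynomial.mapAlgEquiv (optionEquivLeft R _)))

variable {R} {a b : σ} (hab : a ≠ b)

theorem splitTwoVarsEquiv_X_left :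
    splitTwoVarsEquiv R a b hab (X a) = Polynomial.C Polynomial.X := by
  simp [splitTwoVarsEquiv, Equiv.optionOptionSubtypeNe, hab]

theorem splitTwoVarsEquiv_X_right : splitTwoVarsEquiv R a b hab (X b) = Polynomial.X := by
  simp [splitTwoVarsEquiv, Equiv.optionOptionSubtypeNe]

theorem splitTwoVarsEquiv_rename_val (k : MvPolynomial {v // v ≠ a ∧ v ≠ b} R) :
    splitTwoVarsEquiv R a b hab (rename Subtype.val k) = Polynomial.C (Polynomial.C k) := by
  induction k using MvPolynomial.induction_on with
  | C z =>
    rw [rename_C, ← algebraMap_eq, AlgEquiv.commutes, Polynomial.algebraMap_apply,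
      Polynomial.algebraMap_apply, algebraMap_eq]
  | add p q hp hq => simp only [map_add, hp, hq]
  | mul_X p v hp =>
    simp only [map_mul, hp, rename_X]
    simp [splitTwoVarsEquiv, Equiv.optionOptionSubtypeNe, v.2.1, v.2.2]

end MvPolynomial

section Cohomology

variable {Np Nm : ℕ} {ω : Om2 Np Nm} {r : R2 Np Nm}

theorem equiv2_ofR_iff :
    Equiv2 ω (ofR r) ↔ ∃ u v t, ω 0 = r + Pp Np Nm * u + Qq Np Nm * v ∧
      ω 1 = -(Qq Np Nm * t) ∧ ω 2 = Pp Np Nm * t ∧ ω 3 = 0 := by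
  constructor
  · rintro ⟨ρ, hρ⟩
    have h₀ := congrFun hρ 0
    have h₁ := congrFun hρ 1
    have h₂ := congrFun hρ 2
    have h₃ := congrFun hρ 3
    simp only [d2, ofR, Pi.sub_apply, Matrix.cons_val, sub_zero] at h₀ h₁ h₂ h₃
    exact ⟨ρ 1, ρ 2, ρ 3, by linear_combination h₀, h₁, h₂, h₃⟩
  · rintro ⟨u, v, t, h₀, h₁, h₂, h₃⟩
    refine ⟨![0, u, v, t], funext fun i => ?_⟩
    fin_cases i <;> simp [d2, ofR, add_assoc, *]

theorem d2_eq_zero_of_equiv2_ofR (h : Equiv2 ω (ofR r)) : d2 ω = 0 := by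
  obtain ⟨u, v, t, -, h₁, h₂, h₃⟩ := equiv2_ofR_iff.mp h
  funext i
  fin_cases i <;> simp [d2, mul_left_comm, *]

theorem equiv2_ofR_zero_iff : Equiv2 (ofR r) 0 ↔ ∃ u v, r = Pp Np Nm * u + Qq Np Nm * v := by
  have hzero : (0 : Om2 Np Nm) = ofR 0 := by funext i; fin_cases i <;> rfl
  rw [hzero, equiv2_ofR_iff]
  simp [ofR]

end Cohomology

section FirstGhosts

variable {N : ℕ} (hN : 0 < N)

abbrev CoefVars (hN : 0 < N) : Type :=
  {v : Fin N ⊕ Fin N // v ≠ Sum.inl ⟨0, hN⟩ ∧ v ≠ Sum.inr ⟨0, hN⟩}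

def splitFirstGhosts : R2 N N ≃ₐ[ℂ] Polynomial (Polynomial (MvPolynomial (CoefVars hN) ℂ)) :=
  splitTwoVarsEquiv ℂ _ _ Sum.inl_ne_inr

theorem mem_coefRingN_iff {a : R2 N N} :
    a ∈ coefRingN N hN ↔ ∃ k : MvPolynomial (CoefVars hN) ℂ, rename Subtype.val k = a := by
  rw [coefRingN, supported_eq_range_rename]
  rfl

theorem X_mem_coefRingN {v : Fin N ⊕ Fin N} (h₁ : v ≠ Sum.inl ⟨0, hN⟩)
    (h₂ : v ≠ Sum.inr ⟨0, hN⟩) : X v ∈ coefRingN N hN :=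
  X_mem_supported.mpr ⟨h₁, h₂⟩

theorem splitFirstGhosts_ψ : splitFirstGhosts hN (ψ ⟨0, hN⟩) = Polynomial.C Polynomial.X :=
  splitTwoVarsEquiv_X_left _

theorem splitFirstGhosts_χ : splitFirstGhosts hN (χ ⟨0, hN⟩) = Polynomial.X :=
  splitTwoVarsEquiv_X_right _

theorem splitFirstGhosts_rename (k : MvPolynomial (CoefVars hN) ℂ) :
    splitFirstGhosts hN (rename Subtype.val k) = Polynomial.C (Polynomial.C k) :=
  splitTwoVarsEquiv_rename_val _ k

theorem exists_splitFirstGhosts_Pp : ∃ g : Polynomial (MvPolynomial (CoefVars hN) ℂ),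
    g.Monic ∧ g.natDegree = 2 ∧ splitFirstGhosts hN (Pp N N) = Polynomial.C g := by
  have hmem : Pp N N - ψ ⟨0, hN⟩ ^ 2 ∈ coefRingN N hN := by
    rw [Pp, ← Finset.add_sum_erase _ _ (Finset.mem_univ ⟨0, hN⟩), add_sub_cancel_left]
    exact Subalgebra.sum_mem _ fun i hi => pow_mem (X_mem_coefRingN hN
      (by simpa using Finset.ne_of_mem_erase hi) (by simp)) 2
  obtain ⟨p, hp⟩ := (mem_coefRingN_iff hN).mp hmem
  refine ⟨Polynomial.X ^ 2 + Polynomial.C p, Polynomial.monic_X_pow_add_C p two_ne_zero,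
    Polynomial.natDegree_X_pow_add_C, ?_⟩
  rw [← sub_add_cancel (Pp N N) (ψ _ ^ 2), ← hp, map_add, map_pow, splitFirstGhosts_rename,
    splitFirstGhosts_ψ, map_add, map_pow, add_comm]

theorem exists_splitFirstGhosts_Qq :
    ∃ h : Polynomial (Polynomial (MvPolynomial (CoefVars hN) ℂ)), h.Monic ∧ h.natDegree = 2 ∧
      splitFirstGhosts hN (Qq N N) = h := by
  have hmem : Qq N N - χ ⟨0, hN⟩ ^ 2 ∈ coefRingN N hN := by
    rw [Qq, ← Finset.add_sum_erase _ _ (Finset.mem_univ ⟨0, hN⟩), add_sub_cancel_left]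
    exact Subalgebra.sum_mem _ fun i hi => pow_mem (X_mem_coefRingN hN
      (by simp) (by simpa using Finset.ne_of_mem_erase hi)) 2
  obtain ⟨q, hq⟩ := (mem_coefRingN_iff hN).mp hmem
  refine ⟨Polynomial.X ^ 2 + Polynomial.C (Polynomial.C q),
    Polynomial.monic_X_pow_add_C _ two_ne_zero, Polynomial.natDegree_X_pow_add_C, ?_⟩
  rw [← sub_add_cancel (Qq N N) (χ _ ^ 2), ← hq, map_add, map_pow, splitFirstGhosts_rename,
    splitFirstGhosts_χ, add_comm]

def normalForm (i : Fin N) (a₀ a₁ a₂ a₃ : R2 N N) : R2 N N :=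
  a₀ + ψ i * a₁ + χ i * a₂ + ψ i * χ i * a₃

theorem exists_eq_normalForm (r : R2 N N) :
    ∃ a₀ ∈ coefRingN N hN, ∃ a₁ ∈ coefRingN N hN, ∃ a₂ ∈ coefRingN N hN, ∃ a₃ ∈ coefRingN N hN,
      ∃ u v, r = normalForm ⟨0, hN⟩ a₀ a₁ a₂ a₃ + Pp N N * u + Qq N N * v := by
  obtain ⟨g, hg, hg2, hP⟩ := exists_splitFirstGhosts_Pp hN
  obtain ⟨h, hh, hh2, hQ⟩ := exists_splitFirstGhosts_Qq hN
  obtain ⟨k₀, k₁, k₂, k₃, u, v, hr⟩ :=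
    Polynomial.exists_eq_bivariate_normalForm hg hg2 hh hh2 (splitFirstGhosts hN r)
  have hmem k := (mem_coefRingN_iff hN).mpr ⟨k, rfl⟩
  refine ⟨_, hmem k₀, _, hmem k₁, _, hmem k₂, _, hmem k₃, (splitFirstGhosts hN).symm u,
    (splitFirstGhosts hN).symm v, (splitFirstGhosts hN).injective ?_⟩
  simp only [normalForm, map_add, map_mul, splitFirstGhosts_rename, splitFirstGhosts_ψ,
    splitFirstGhosts_χ, hP, hQ, AlgEquiv.apply_symm_apply, hr]

theorem normalForm_eq_zero {a₀ a₁ a₂ a₃ u v : R2 N N} (ha₀ : a₀ ∈ coefRingN N hN)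
    (ha₁ : a₁ ∈ coefRingN N hN) (ha₂ : a₂ ∈ coefRingN N hN) (ha₃ : a₃ ∈ coefRingN N hN)
    (heq : normalForm ⟨0, hN⟩ a₀ a₁ a₂ a₃ = Pp N N * u + Qq N N * v) :
    a₀ = 0 ∧ a₁ = 0 ∧ a₂ = 0 ∧ a₃ = 0 := by
  obtain ⟨g, hg, hg2, hP⟩ := exists_splitFirstGhosts_Pp hN
  obtain ⟨h, hh, hh2, hQ⟩ := exists_splitFirstGhosts_Qq hN
  obtain ⟨k₀, rfl⟩ := (mem_coefRingN_iff hN).mp ha₀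
  obtain ⟨k₁, rfl⟩ := (mem_coefRingN_iff hN).mp ha₁
  obtain ⟨k₂, rfl⟩ := (mem_coefRingN_iff hN).mp ha₂
  obtain ⟨k₃, rfl⟩ := (mem_coefRingN_iff hN).mp ha₃
  have heq' := congrArg (splitFirstGhosts hN) heq
  simp only [normalForm, map_add, map_mul, splitFirstGhosts_rename, splitFirstGhosts_ψ,
    splitFirstGhosts_χ, hP, hQ] at heq'
  obtain ⟨h₀, h₁, h₂, h₃⟩ := Polynomial.bivariate_normalForm_eq_zero hg hg2 hh hh2 heq'
  simp [h₀, h₁, h₂, h₃]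

theorem exists_eq_Qq_mul_of_Pp_mul_add_Qq_mul_eq_zero (hN : 0 < N) {r s : R2 N N}
    (h₀ : Pp N N * r + Qq N N * s = 0) : ∃ t, r = Qq N N * t ∧ s = -(Pp N N * t) := by
  obtain ⟨g, hg, -, hP⟩ := exists_splitFirstGhosts_Pp hN
  obtain ⟨h, hh, -, hQ⟩ := exists_splitFirstGhosts_Qq hN
  have h₀' := congrArg (splitFirstGhosts hN) h₀
  rw [map_add, map_mul, map_mul, hP, hQ, map_zero] at h₀'
  obtain ⟨t, hr, hs⟩ := hh.exists_eq_mul_of_C_mul_add_mul_eq_zero hg.ne_zero h₀'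
  refine ⟨(splitFirstGhosts hN).symm t, (splitFirstGhosts hN).injective ?_,
    (splitFirstGhosts hN).injective ?_⟩ <;>
    simp [hP, hQ, hr, hs]

theorem Qq_ne_zero (hN : 0 < N) : Qq N N ≠ 0 := by
  obtain ⟨h, hh, -, hQ⟩ := exists_splitFirstGhosts_Qq hN
  rw [← map_ne_zero_iff _ (splitFirstGhosts hN).injective, hQ]
  exact hh.ne_zero

theorem exists_equiv2_ofR_normalForm_of_d2_eq_zero {ω : Om2 N N} (hω : d2 ω = 0) :
    ∃ a₀ ∈ coefRingN N hN, ∃ a₁ ∈ coefRingN N hN, ∃ a₂ ∈ coefRingN N hN, ∃ a₃ ∈ coefRingN N hN,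
      Equiv2 ω (ofR (normalForm ⟨0, hN⟩ a₀ a₁ a₂ a₃)) := by
  have h₀ : Pp N N * ω 1 + Qq N N * ω 2 = 0 := congrFun hω 0
  have hQω : -(Qq N N * ω 3) = 0 := congrFun hω 1
  have h₃ : ω 3 = 0 := (mul_eq_zero.mp (neg_eq_zero.mp hQω)).resolve_left (Qq_ne_zero hN)
  obtain ⟨t, h₁, h₂⟩ := exists_eq_Qq_mul_of_Pp_mul_add_Qq_mul_eq_zero hN h₀
  obtain ⟨a₀, ha₀, a₁, ha₁, a₂, ha₂, a₃, ha₃, u, v, hr⟩ := exists_eq_normalForm hN (ω 0)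
  exact ⟨a₀, ha₀, a₁, ha₁, a₂, ha₂, a₃, ha₃,
    equiv2_ofR_iff.mpr ⟨u, v, -t, hr, by rw [h₁]; ring, by rw [h₂]; ring, h₃⟩⟩

end FirstGhosts

open scoped Matrix

namespace Matrix

variable {n K A : Type*} [Fintype n] [CommRing K] [CommRing A] (f : K →+* A)

theorem sum_sum_vecMul_map_mul_vecMul_map_mul (z : n → A) (B M : Matrix n n K) :
    ∑ α, ∑ β, (z ᵥ* B.map f) α * (z ᵥ* B.map f) β * f (M α β)
      = ∑ j, ∑ k, z j * z k * f ((B * M * Bᵀ) j k) := by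
  have hform (y : n → A) (Q : Matrix n n A) : ∑ α, ∑ β, y α * y β * Q α β = y ⬝ᵥ (Q *ᵥ y) := by
    simp only [dotProduct, mulVec, Finset.mul_sum]
    exact Finset.sum_congr rfl fun _ _ => Finset.sum_congr rfl fun _ _ => by ring
  calc _ = (z ᵥ* B.map f) ⬝ᵥ (M.map f *ᵥ (z ᵥ* B.map f)) := hform _ (M.map f)
    _ = z ⬝ᵥ ((B * M * Bᵀ).map f *ᵥ z) := by
      rw [Matrix.map_mul, Matrix.map_mul, transpose_map, ← mulVec_mulVec, ← mulVec_mulVec,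
        mulVec_transpose, dotProduct_mulVec z]
    _ = _ := (hform z _).symm

variable [DecidableEq n] {M : Matrix n n K}

theorem inv_map_mulVec_map_mulVec (hM : IsUnit M.det) (v : n → A) :
    M⁻¹.map f *ᵥ (M.map f *ᵥ v) = v := by
  rw [mulVec_mulVec, ← Matrix.map_mul, nonsing_inv_mul _ hM,
    Matrix.map_one _ f.map_zero f.map_one, one_mulVec]

theorem map_mulVec_inv_map_mulVec (hM : IsUnit M.det) (v : n → A) :
    M.map f *ᵥ (M⁻¹.map f *ᵥ v) = v := by
  rw [mulVec_mulVec, ← Matrix.map_mul, mul_nonsing_inv _ hM,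
    Matrix.map_one _ f.map_zero f.map_one, one_mulVec]

end Matrix

theorem MvPolynomial.mulVec_map_C_mem {σ R m n : Type*} [Fintype n] [CommSemiring R]
    {T : Subalgebra R (MvPolynomial σ R)} (M : Matrix m n R) {v : n → MvPolynomial σ R}
    (hv : ∀ j, v j ∈ T) (i : m) : (M.map C *ᵥ v) i ∈ T :=
  Subalgebra.sum_mem _ fun j _ => mul_mem (T.algebraMap_mem (M i j)) (hv j)

section Spinors

open Matrix Complex

theorem sigma2_mul_sigma2 : sigma2 * sigma2 = 1 := by
  ext i j
  fin_cases i <;> fin_cases j <;> simp [sigma2, Matrix.mul_apply]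

variable {S : Matrix (Fin 2) (Fin 2) ℂ}

theorem Cmat_inv (hS : IsUnit S.det) : (Cmat S)⁻¹ = S * sigma2 * Sᵀ := by
  rw [Cmat, Matrix.mul_inv_rev, Matrix.mul_inv_rev, inv_eq_left_inv sigma2_mul_sigma2,
    nonsing_inv_nonsing_inv _ hS, nonsing_inv_nonsing_inv _ (by rwa [det_transpose]),
    Matrix.mul_assoc]

theorem inv_mul_Gam_mul_Cmat_inv_mul_inv_transpose (hS : IsUnit S.det) :
    S⁻¹ * (Gam S * (Cmat S)⁻¹) * S⁻¹ᵀ = sigma3 * sigma2 := by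
  have hSt : IsUnit Sᵀ.det := by rwa [det_transpose]
  rw [Cmat_inv hS, Gam, transpose_nonsing_inv]
  simp only [Matrix.mul_assoc, nonsing_inv_mul_cancel_left _ _ hS, mul_nonsing_inv _ hSt,
    Matrix.mul_one]

variable {N : ℕ}

theorem xi_eq_vecMul (S : Matrix (Fin 2) (Fin 2) ℂ) (i : Fin N) :
    xi S i = ![ψ i, χ i] ᵥ* S⁻¹.map C := by
  funext α
  simp [xi, vecMul, dotProduct, Fin.sum_univ_two, mul_comm]

theorem sum_xi_mul (S : Matrix (Fin 2) (Fin 2) ℂ) (i : Fin N) (aa : Fin 2 → R2 N N) :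
    ∑ α, xi S i α * aa α = ψ i * (S⁻¹.map C *ᵥ aa) 0 + χ i * (S⁻¹.map C *ᵥ aa) 1 := by
  simp only [xi, mulVec, dotProduct, Fin.sum_univ_two, Matrix.map_apply]
  ring

theorem sum_sum_xi_mul_xi_mul (hS : IsUnit S.det) (i : Fin N) :
    ∑ α, ∑ β, xi S i α * xi S i β * C ((Gam S * (Cmat S)⁻¹) α β)
      = C (-2 * I) * (ψ i * χ i) := by
  rw [xi_eq_vecMul, sum_sum_vecMul_map_mul_vecMul_map_mul,
    inv_mul_Gam_mul_Cmat_inv_mul_inv_transpose hS]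
  simp only [sigma3, sigma2, Matrix.mul_apply, Fin.sum_univ_two, of_apply, cons_val',
    cons_val_fin_one, cons_val_zero, cons_val_one, map_add, map_mul, map_neg, map_zero, map_one,
    map_ofNat]
  ring

theorem add_sum_xi_mul_add_mul_eq_normalForm (hS : IsUnit S.det) (i : Fin N) (a b : R2 N N)
    (aa : Fin 2 → R2 N N) :
    a + ∑ α, xi S i α * aa α
      + (∑ α, ∑ β, xi S i α * xi S i β * C ((Gam S * (Cmat S)⁻¹) α β)) * b
      = normalForm i a ((S⁻¹.map C *ᵥ aa) 0) ((S⁻¹.map C *ᵥ aa) 1) (C (-2 * I) * b) := by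
  rw [normalForm, sum_xi_mul, sum_sum_xi_mul_xi_mul hS]
  ring

end Spinors

/-- for `N ≥ 1` and any invertible `S` (equivalent spinor
representation of the Euclidean D = 2 case), (i) `dω = 0` iff
`ω ∼ a + Σ_α ξ₁^α a_α + (Σ_{α,β} ξ₁^α ξ₁^β (ΓC⁻¹)_{αβ}) b` with coefficients in
`ℂ[ψ₂,…,ψ_N, χ₂,…,χ_N]`; (ii) such a combination is `∼ 0` iff
`a = a₁ = a₂ = b = 0`. -/
theorem stmt5 (N : ℕ) (hN : 0 < N)
    (S : Matrix (Fin 2) (Fin 2) ℂ) (hS : IsUnit S.det) :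
    (∀ ω : Om2 N N, d2 ω = 0 ↔
      ∃ a ∈ coefRingN N hN,
      ∃ aa : Fin 2 → R2 N N, (∀ α, aa α ∈ coefRingN N hN) ∧
      ∃ b ∈ coefRingN N hN,
        Equiv2 ω (ofR (a + (∑ α, xi S ⟨0, hN⟩ α * aa α)
          + (∑ α, ∑ β, xi S ⟨0, hN⟩ α * xi S ⟨0, hN⟩ β
              * C ((Gam S * (Cmat S)⁻¹) α β)) * b)))
    ∧
    (∀ (a : R2 N N) (aa : Fin 2 → R2 N N) (b : R2 N N),
      a ∈ coefRingN N hN → (∀ α, aa α ∈ coefRingN N hN) → b ∈ coefRingN N hN →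
      (Equiv2 (ofR (a + (∑ α, xi S ⟨0, hN⟩ α * aa α)
          + (∑ α, ∑ β, xi S ⟨0, hN⟩ α * xi S ⟨0, hN⟩ β
              * C ((Gam S * (Cmat S)⁻¹) α β)) * b)) 0 ↔
        (a = 0 ∧ aa 0 = 0 ∧ aa 1 = 0 ∧ b = 0))) := by
  refine ⟨fun ω => ⟨fun hω => ?_, fun ⟨_, _, _, _, _, _, h⟩ => d2_eq_zero_of_equiv2_ofR h⟩,
    fun a aa b ha haa hb => ?_⟩
  · obtain ⟨a, ha, a₁, ha₁, a₂, ha₂, a₃, ha₃, hω'⟩ :=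
      exists_equiv2_ofR_normalForm_of_d2_eq_zero hN hω
    refine ⟨a, ha, S.map C *ᵥ ![a₁, a₂], mulVec_map_C_mem S (Fin.forall_fin_two.mpr ⟨ha₁, ha₂⟩),
      C (Complex.I / 2) * a₃, mul_mem ((coefRingN N hN).algebraMap_mem _) ha₃, ?_⟩
    have hI : (C (-2 * Complex.I) * C (Complex.I / 2) : R2 N N) = 1 := by
      rw [← map_mul]
      ring_nf
      simp
    rw [add_sum_xi_mul_add_mul_eq_normalForm hS, Matrix.inv_map_mulVec_map_mulVec _ hS,
      ← mul_assoc (C _), hI, one_mul]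
    simpa using hω'
  · rw [equiv2_ofR_zero_iff, add_sum_xi_mul_add_mul_eq_normalForm hS]
    constructor
    · rintro ⟨u, v, huv⟩
      obtain ⟨rfl, h₁, h₂, h₃⟩ := normalForm_eq_zero hN ha (mulVec_map_C_mem _ haa 0)
        (mulVec_map_C_mem _ haa 1) (mul_mem ((coefRingN N hN).algebraMap_mem _) hb) huv
      have h₁₂ : S⁻¹.map C *ᵥ aa = 0 := by
        funext α
        revert α
        exact Fin.forall_fin_two.mpr ⟨h₁, h₂⟩
      have haa' : aa = 0 := by
        rw [← Matrix.map_mulVec_inv_map_mulVec C hS aa, h₁₂, Matrix.mulVec_zero]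
      exact ⟨rfl, by simp [haa'], by simp [haa'],
        (mul_eq_zero.mp h₃).resolve_left (by simp [Complex.I_ne_zero])⟩
    · rintro ⟨rfl, h₀, h₁, rfl⟩
      exact ⟨0, 0, by simp [normalForm, Matrix.mulVec, dotProduct, Fin.sum_univ_two, h₀, h₁]⟩
end
end
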